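/- arXiv:1205.5735 — 4 statements merged into one kernel-verified Lean document; each statement's English description precedes it below -/
import Mathlib

section
/- If R_0 > 1, the starvation relation is transitive: if j ≻ k and k ≻ ℓ, then j ≻ ℓ. -/
open scoped ENNReal

/-- Product of the follow-on constants over the cyclic interval `[j,k)` in `ZMod n`
(the empty product for `j = k`). -/
noncomputable def cycProd {n : ℕ} (M : ZMod n → ℝ≥0∞) (j k : ZMod n) : ℝ≥0∞ :=
  ∏ i ∈ Finset.range ((k - j).val), M (j + (i : ZMod n))

/-! Going `m` steps around the cycle from `j` costs `R₀ ^ (m / n)` times the product over the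
cyclic interval `[j, j + m)`. Splitting `[j, ℓ)` at `k` therefore gives
`M_{jk} M_{kℓ} = R₀ ^ q M_{jℓ}` with `q ∈ {0, 1}`, so `M_{jℓ} ≤ M_{jk} M_{kℓ}` once `R₀ ≥ 1`,
and `b_j M_{jℓ} ≤ b_j M_{jk} M_{kℓ} < b_k M_{kℓ} < b_ℓ`. -/

open Finset

namespace ZMod

variable {n : ℕ} [NeZero n] {α : Type*} [CommMonoid α]

theorem prod_range_add_natCast (f : ZMod n → α) (x : ZMod n) :
    ∏ i ∈ range n, f (x + i) = ∏ j, f j := by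
  rw [← Fin.prod_univ_eq_prod_range (fun i => f (x + i))]
  refine Fintype.prod_bijective (fun i : Fin n => x + (i : ℕ)) ?_ _ _ fun _ => rfl
  refine (Fintype.bijective_iff_surjective_and_card _).mpr ⟨fun y => ?_, by simp⟩
  exact ⟨⟨(y - x).val, val_lt _⟩, by simp⟩

theorem prod_range_mul_add_natCast (f : ZMod n → α) (x : ZMod n) (q : ℕ) :
    ∏ i ∈ range (n * q), f (x + i) = (∏ j, f j) ^ q := by
  induction q with
  | zero => simp
  | succ q ih =>
    rw [Nat.mul_succ, prod_range_add, ih, pow_succ, ← prod_range_add_natCast f x]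
    simp

theorem prod_range_add_natCast_eq_pow_mul (f : ZMod n → α) (x : ZMod n) (m : ℕ) :
    ∏ i ∈ range m, f (x + i) = (∏ j, f j) ^ (m / n) * ∏ i ∈ range (m % n), f (x + i) := by
  conv_lhs => rw [← Nat.div_add_mod m n]
  rw [prod_range_add, prod_range_mul_add_natCast]
  simp

end ZMod

section cycProd

variable {n : ℕ} {M : ZMod n → ℝ≥0∞}

theorem cycProd_pos (hM : ∀ j, 0 < M j) (j k : ZMod n) : 0 < cycProd M j k :=
  CanonicallyOrderedAdd.prod_pos.mpr fun _ _ => hM _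

theorem cycProd_lt_top (hM : ∀ j, M j < ⊤) (j k : ZMod n) : cycProd M j k < ⊤ :=
  ENNReal.prod_lt_top fun _ _ => hM _

variable [NeZero n] (M)

theorem cycProd_mul_cycProd (j k l : ZMod n) :
    cycProd M j k * cycProd M k l =
      (∏ i, M i) ^ (((k - j).val + (l - k).val) / n) * cycProd M j l := by
  have hlj : l - j = (((k - j).val + (l - k).val : ℕ) : ZMod n) := by simp
  rw [cycProd, cycProd, cycProd, hlj, ZMod.val_natCast,
    ← ZMod.prod_range_add_natCast_eq_pow_mul, prod_range_add]
  congr 1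
  refine prod_congr rfl fun i _ => ?_
  rw [Nat.cast_add, ZMod.natCast_zmod_val, ← add_assoc, add_sub_cancel]

theorem cycProd_le_mul_cycProd (hR₀ : 1 ≤ ∏ i, M i) (j k l : ZMod n) :
    cycProd M j l ≤ cycProd M j k * cycProd M k l := by
  rw [cycProd_mul_cycProd]
  exact le_mul_of_one_le_left' (one_le_pow₀ hR₀)

end cycProd

theorem starvation_transitive_general {n : ℕ} [NeZero n]
    (M : ZMod n → ℝ≥0∞) (hM : ∀ j, 0 < M j ∧ M j < ⊤)
    (b : ZMod n → ℝ≥0∞)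
    (hR0 : 1 < ∏ j : ZMod n, M j) :
    ∀ j k l : ZMod n,
      (b j < ⊤ ∧ b j * cycProd M j k < b k) →
      (b k < ⊤ ∧ b k * cycProd M k l < b l) →
      (b j < ⊤ ∧ b j * cycProd M j l < b l) := by
  intro j k l ⟨hjt, hjk⟩ ⟨_, hkl⟩
  refine ⟨hjt, ?_⟩
  have hkl_ne_zero := (cycProd_pos (fun i => (hM i).1) k l).ne'
  have hkl_ne_top := (cycProd_lt_top (fun i => (hM i).2) k l).ne
  calc b j * cycProd M j l
      ≤ b j * (cycProd M j k * cycProd M k l) :=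
        mul_le_mul_right (cycProd_le_mul_cycProd M hR0.le j k l) _
    _ = b j * cycProd M j k * cycProd M k l := (mul_assoc _ _ _).symm
    _ < b k * cycProd M k l := (ENNReal.mul_lt_mul_iff_left hkl_ne_zero hkl_ne_top).mpr hjk
    _ < b l := hkl

/-- If `R₀ > 1`, the starvation relation is transitive: `j ≻ k` and `k ≻ ℓ` imply `j ≻ ℓ`. -/
theorem starvation_transitive {n : ℕ} [NeZero n]
    (M : ZMod n → ℝ≥0∞) (hM : ∀ j, 0 < M j ∧ M j < ⊤)
    (b : ZMod n → ℝ≥0∞) (hb : ∀ j, 0 < b j)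
    (hR0 : 1 < ∏ j : ZMod n, M j) :
    ∀ j k l : ZMod n,
      (b j < ⊤ ∧ b j * cycProd M j k < b k) →
      (b k < ⊤ ∧ b k * cycProd M k l < b l) →
      (b j < ⊤ ∧ b j * cycProd M j l < b l) :=
  starvation_transitive_general M hM b hR0
end

section
/- If the parameter set is generic and a biologically meaningful infected fixed point (S*,T*) is moderated, then it is saturated: Unstr(θ) ⊆ Reg(S*,T*) and Str(θ) ⊆ Unreg(S*,T*), hence Reg(S*,T*) = Unstr(θ). -/
/-! An unregulated stage `j` whose nearest preceding regulated stage is `m` has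
`S*_j = b_m M_{mj}`, so moderation says precisely that `m` starves `j`. Hence every
unstarvable stage is regulated, and every starved stage, being starved by an unstarvable
(so regulated) stage, is unregulated by the Proposition. -/

theorem exists_starves_of_unregulated {n : ℕ} (S T b : ZMod n → ℝ) (M2 : ZMod n → ZMod n → ℝ)
    (hunreg : ∀ j m : ZMod n, T j = 0 → 0 < T m →
      (∀ i ∈ Finset.range ((j - m).val - 1), T (m + 1 + (i : ZMod n)) = 0) →
      S j = b m * M2 m j)
    (hexists : ∀ j, T j = 0 → ∃ m, 0 < T m ∧
      ∀ i ∈ Finset.range ((j - m).val - 1), T (m + 1 + (i : ZMod n)) = 0)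
    (hmod : ∀ j, T j = 0 → S j < b j) {j : ZMod n} (hj : T j = 0) :
    ∃ m, b m * M2 m j < b j := by
  obtain ⟨m, hm, hnear⟩ := hexists j hj
  exact ⟨m, hunreg j m hj hm hnear ▸ hmod j hj⟩

theorem moderated_implies_saturated_general {n : ℕ}
    (S T b : ZMod n → ℝ) (M2 : ZMod n → ZMod n → ℝ)
    (hT : ∀ j, 0 ≤ T j)
    -- value of an unregulated stage via its nearest preceding regulated stage
    (hunreg : ∀ j m : ZMod n, T j = 0 → 0 < T m →
      (∀ i ∈ Finset.range ((j - m).val - 1), T (m + 1 + (i : ZMod n)) = 0) →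
      S j = b m * M2 m j)
    -- every unregulated stage has a nearest preceding regulated stage (Reg ≠ ∅)
    (hexists : ∀ j, T j = 0 → ∃ m, 0 < T m ∧
      ∀ i ∈ Finset.range ((j - m).val - 1), T (m + 1 + (i : ZMod n)) = 0)
    -- Proposition: if j starves k and j is regulated, then k is unregulated
    (hstarvesProp : ∀ j k, b j * M2 j k < b k → 0 < T j → T k = 0)
    -- every starvable stage is starved by some unstarvable (≻-maximal) stage
    (hmax : ∀ k, (∃ j, b j * M2 j k < b k) →
      ∃ j, b j * M2 j k < b k ∧ ¬∃ i, b i * M2 i j < b j)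
    -- moderation
    (hmod : ∀ j, T j = 0 → S j < b j) :
    (∀ j, (¬∃ i, b i * M2 i j < b j) → 0 < T j) ∧
      (∀ k, (∃ i, b i * M2 i k < b k) → T k = 0) := by
  have unstarved_regulated : ∀ j, (¬∃ i, b i * M2 i j < b j) → 0 < T j := fun j hj =>
    (hT j).lt_of_ne fun h =>
      hj (exists_starves_of_unregulated S T b M2 hunreg hexists hmod h.symm)
  refine ⟨unstarved_regulated, fun k hk => ?_⟩
  obtain ⟨j, hjk, hj⟩ := hmax k hk
  exact hstarvesProp j k hjk (unstarved_regulated j hj)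

/-- If the parameter set is generic and a biologically meaningful infected fixed point
is moderated (every unregulated stage has `S* < b`), then it is saturated:
`Unstr(θ) ⊆ Reg(S*,T*)` and `Str(θ) ⊆ Unreg(S*,T*)`, i.e. `Reg(S*,T*) = Unstr(θ)`.
Here `i` starves `j` means `b i * M_{ij} < b j`; the needed fixed-point facts are
supplied as hypotheses. -/
theorem moderated_implies_saturated {n : ℕ} [NeZero n]
    (S T b : ZMod n → ℝ) (M2 : ZMod n → ZMod n → ℝ)
    (hT : ∀ j, 0 ≤ T j)
    (hb : ∀ j, 0 < b j) (hM2 : ∀ j k, 0 < M2 j k)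
    -- regulated stages sit at their threshold
    (hreg : ∀ j, 0 < T j → S j = b j)
    -- value of an unregulated stage via its nearest preceding regulated stage
    (hunreg : ∀ j m : ZMod n, T j = 0 → 0 < T m →
      (∀ i ∈ Finset.range ((j - m).val - 1), T (m + 1 + (i : ZMod n)) = 0) →
      S j = b m * M2 m j)
    -- every unregulated stage has a nearest preceding regulated stage (Reg ≠ ∅)
    (hexists : ∀ j, T j = 0 → ∃ m, 0 < T m ∧
      ∀ i ∈ Finset.range ((j - m).val - 1), T (m + 1 + (i : ZMod n)) = 0)
    -- Proposition: if j starves k and j is regulated, then k is unregulated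
    (hstarvesProp : ∀ j k, b j * M2 j k < b k → 0 < T j → T k = 0)
    -- every starvable stage is starved by some unstarvable (≻-maximal) stage
    (hmax : ∀ k, (∃ j, b j * M2 j k < b k) →
      ∃ j, b j * M2 j k < b k ∧ ¬∃ i, b i * M2 i j < b j)
    -- moderation
    (hmod : ∀ j, T j = 0 → S j < b j) :
    (∀ j, (¬∃ i, b i * M2 i j < b j) → 0 < T j) ∧
      (∀ k, (∃ i, b i * M2 i k < b k) → T k = 0) :=
  moderated_implies_saturated_general S T b M2 hT hunreg hexists hstarvesProp hmax hmod
end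

section
/- If the parameter set is generic and a biologically meaningful infected fixed point (S*,T*) is saturated (Reg(S*,T*) = Unstr(θ)), then it is moderated: S*_k < b_k for every unregulated stage k. -/
/-!
Saturation forces every unregulated stage `k` to be starvable, hence starved by an unstarvable
stage `j`, which saturation makes regulated. The nearest regulated stage `m` preceding `k` then
lies in the cyclic interval `[j, k]`, and since `m` is unstarvable, `j` does not starve `m`;
multiplicativity of the products `M` transports the starvation of `k` from `j` to `m`, and
`S* k = b m * M m k`.
-/

namespace ZMod

variable {n : ℕ} [NeZero n]

theorem add_one_add_natCast_pred_val_sub {a b : ZMod n} (h : a ≠ b) :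
    a + 1 + (((b - a).val - 1 : ℕ) : ZMod n) = b := by
  have hpos : 0 < (b - a).val := val_pos.mpr (sub_ne_zero.mpr h.symm)
  rw [Nat.cast_sub hpos, natCast_zmod_val]
  ring

theorem val_sub_lt_val_sub_of_val_sub_lt {j m k : ZMod n} (hjk : j ≠ k)
    (h : (k - j).val < (m - j).val) : (j - m).val < (k - m).val := by
  have hmj : m - j ≠ 0 := val_pos.mp (by omega)
  have hkj : 0 < (k - j).val := val_pos.mpr (sub_ne_zero.mpr hjk.symm)
  have hjm : (j - m).val = n - (m - j).val := by
    rw [← neg_sub, neg_val, if_neg hmj]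
  have := (m - j).val_lt
  rw [show k - m = (k - j) + (j - m) by ring, val_add_of_lt (by omega)]
  omega

/-- If `k` comes strictly before `m` on the cycle read from `j`, then `j` lies strictly
between `m` and `k` on the cycle read from `m`. -/
theorem exists_mem_range_add_eq_of_val_sub_lt {j m k : ZMod n} (hjk : j ≠ k)
    (h : (k - j).val < (m - j).val) :
    ∃ i ∈ Finset.range ((k - m).val - 1), m + 1 + (i : ZMod n) = j := by
  have hmj : m ≠ j := by rintro rfl; simp at h
  refine ⟨(j - m).val - 1, Finset.mem_range.mpr ?_, add_one_add_natCast_pred_val_sub hmj⟩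
  have := val_sub_lt_val_sub_of_val_sub_lt hjk h
  have := val_pos.mpr (sub_ne_zero.mpr hmj.symm)
  omega

end ZMod

/-- `i` starves `j`: the paper's `i ≻ j`. -/
def Starves {ι : Type*} (b : ι → ℝ) (M : ι → ι → ℝ) (i j : ι) : Prop :=
  b i * M i j < b j

theorem starves_of_starves_of_not_starves {ι : Type*} {b : ι → ℝ} {M : ι → ι → ℝ} {j m k : ι}
    (hM : 0 < M m k) (hmul : M j m * M m k = M j k)
    (hjk : Starves b M j k) (hjm : ¬Starves b M j m) : Starves b M m k :=
  calc b m * M m k ≤ b j * M j m * M m k := by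
        gcongr
        exact not_lt.mp hjm
    _ = b j * M j k := by rw [mul_assoc, hmul]
    _ < b k := hjk

theorem saturated_implies_moderated_general {n : ℕ} [NeZero n]
    (S T b : ZMod n → ℝ) (M2 : ZMod n → ZMod n → ℝ)
    (hM2 : ∀ j k, 0 < M2 j k)
    -- multiplicativity of the cyclic products: M_{jm} M_{mk} = M_{jk} for m ∈ [j,k]
    (hMmul : ∀ j m k : ZMod n, (m - j).val ≤ (k - j).val →
      M2 j m * M2 m k = M2 j k)
    -- value of an unregulated stage via its nearest preceding regulated stage
    (hunreg : ∀ k m : ZMod n, T k = 0 → 0 < T m →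
      (∀ i ∈ Finset.range ((k - m).val - 1), T (m + 1 + (i : ZMod n)) = 0) →
      S k = b m * M2 m k)
    -- every unregulated stage has a nearest preceding regulated stage (Reg ≠ ∅)
    (hexists : ∀ k, T k = 0 → ∃ m, 0 < T m ∧
      ∀ i ∈ Finset.range ((k - m).val - 1), T (m + 1 + (i : ZMod n)) = 0)
    -- every starvable stage is starved by some unstarvable (≻-maximal) stage
    (hmax : ∀ k, (∃ j, b j * M2 j k < b k) →
      ∃ j, b j * M2 j k < b k ∧ ¬∃ i, b i * M2 i j < b j)
    -- saturation: Reg(S*,T*) = Unstr(θ)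
    (hsat : ∀ j, 0 < T j ↔ ¬∃ i, b i * M2 i j < b j) :
    ∀ k, T k = 0 → S k < b k := by
  intro k hTk
  have hk_starvable : ∃ i, Starves b M2 i k := by
    by_contra h
    exact ((hsat k).mpr h).ne' hTk
  obtain ⟨j, hjk, hj_unstarvable⟩ := hmax k hk_starvable
  have hTj : 0 < T j := (hsat j).mpr hj_unstarvable
  obtain ⟨m, hTm, hgap⟩ := hexists k hTk
  have hm_mem : (m - j).val ≤ (k - j).val := by
    by_contra! h
    obtain ⟨i, hi, rfl⟩ :=
      ZMod.exists_mem_range_add_eq_of_val_sub_lt (by rintro rfl; linarith) h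
    linarith [hgap i hi]
  rw [hunreg k m hTk hTm hgap]
  exact starves_of_starves_of_not_starves (hM2 m k) (hMmul j m k hm_mem) hjk
    fun hjm => (hsat m).mp hTm ⟨j, hjm⟩

/-- If the parameter set is generic and a biologically meaningful infected fixed point
is saturated (`Reg(S*,T*) = Unstr(θ)`), then it is moderated: `S* k < b k` for every
unregulated stage `k`.  Here `i` starves `j` means `b i * M_{ij} < b j`; the needed
fixed-point facts and the multiplicativity of the cyclic products `M_{jk}` are
supplied as hypotheses. -/
theorem saturated_implies_moderated {n : ℕ} [NeZero n]
    (S T b : ZMod n → ℝ) (M2 : ZMod n → ZMod n → ℝ)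
    (hT : ∀ j, 0 ≤ T j)
    (hb : ∀ j, 0 < b j) (hM2 : ∀ j k, 0 < M2 j k)
    -- multiplicativity of the cyclic products: M_{jm} M_{mk} = M_{jk} for m ∈ [j,k]
    (hMmul : ∀ j m k : ZMod n, (m - j).val ≤ (k - j).val →
      M2 j m * M2 m k = M2 j k)
    -- regulated stages sit at their threshold
    (hreg : ∀ j, 0 < T j → S j = b j)
    -- value of an unregulated stage via its nearest preceding regulated stage
    (hunreg : ∀ k m : ZMod n, T k = 0 → 0 < T m →
      (∀ i ∈ Finset.range ((k - m).val - 1), T (m + 1 + (i : ZMod n)) = 0) →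
      S k = b m * M2 m k)
    -- every unregulated stage has a nearest preceding regulated stage (Reg ≠ ∅)
    (hexists : ∀ k, T k = 0 → ∃ m, 0 < T m ∧
      ∀ i ∈ Finset.range ((k - m).val - 1), T (m + 1 + (i : ZMod n)) = 0)
    -- every starvable stage is starved by some unstarvable (≻-maximal) stage
    (hmax : ∀ k, (∃ j, b j * M2 j k < b k) →
      ∃ j, b j * M2 j k < b k ∧ ¬∃ i, b i * M2 i j < b j)
    -- saturation: Reg(S*,T*) = Unstr(θ)
    (hsat : ∀ j, 0 < T j ↔ ¬∃ i, b i * M2 i j < b j) :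
    ∀ k, T k = 0 → S k < b k :=
  saturated_implies_moderated_general S T b M2 hM2 hMmul hunreg hexists hmax hsat
end

section
/- If SE(θ) ≠ ∅, then ≻ is transitive: j ≻ k and k ≻ ℓ imply j ≻ ℓ; in particular the case ℓ ∈ [j,k] is impossible since (j,k] ∪ (k,ℓ] would cover all stages while avoiding SE(θ). -/
open scoped ENNReal

/-!
If `k` lies in `[j, l]`, every stage of `(j, l]` lies in `(j, k]` or
in `(k, l]`, both of which avoid `SE`, and the follow-on constants compose, so
`b j * M_{jl} = (b j * M_{jk}) * M_{kl} < b k * M_{kl} < b l`. Otherwise `(j, k] ∪ (k, l]` wraps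
around the whole cycle, so it would meet the nonempty set `SE`.
-/

namespace ZMod

variable {n : ℕ} [NeZero n]

theorem val_sub_add_val_eq_or (a b : ZMod n) :
    (a - b).val + b.val = a.val ∨ (a - b).val + b.val = a.val + n := by
  rcases lt_or_ge ((a - b).val + b.val) n with h | h
  · left
    rw [← val_add_of_lt h, sub_add_cancel]
  · right
    rw [← sub_add_cancel a b, val_add_of_le h, sub_add_cancel]
    have := val_lt (a - b)
    omega

/-- The cyclic interval `(j, k]`; for `k = j` it is empty. -/
def cyclicIoc (j k : ZMod n) : Set (ZMod n) :=
  {m | 0 < (m - j).val ∧ (m - j).val ≤ (k - j).val}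

theorem cyclicIoc_subset_union {j k l : ZMod n} (h : (k - j).val ≤ (l - j).val) :
    cyclicIoc j l ⊆ cyclicIoc j k ∪ cyclicIoc k l := by
  intro m ⟨hm0, hml⟩
  by_cases hmk : (m - j).val ≤ (k - j).val
  · exact Or.inl ⟨hm0, hmk⟩
  · right
    have hm := val_sub_add_val_eq_or (m - j) (k - j)
    have hl := val_sub_add_val_eq_or (l - j) (k - j)
    rw [sub_sub_sub_cancel_right] at hm hl
    have := val_lt (m - k)
    have := val_lt (l - k)
    constructor <;> omega

theorem cyclicIoc_union_eq_univ {j k l : ZMod n} (h : (l - j).val < (k - j).val) :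
    cyclicIoc j k ∪ cyclicIoc k l = Set.univ := by
  refine Set.eq_univ_of_forall fun m ↦ ?_
  by_cases hm : 0 < (m - j).val ∧ (m - j).val ≤ (k - j).val
  · exact Or.inl hm
  · right
    have hmk := val_sub_add_val_eq_or (m - j) (k - j)
    have hlk := val_sub_add_val_eq_or (l - j) (k - j)
    rw [sub_sub_sub_cancel_right] at hmk hlk
    have := val_lt (m - j)
    have := val_lt (m - k)
    have := val_lt (k - j)
    constructor <;> omega

end ZMod

open ZMod

theorem SE_starvation_transitive_general {n : ℕ} [NeZero n]
    (SE : Set (ZMod n)) (hSE : SE.Nonempty)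
    (b : ZMod n → ℝ≥0∞)
    (M2 : ZMod n → ZMod n → ℝ≥0∞) (hM2 : ∀ j k, 0 < M2 j k ∧ M2 j k < ⊤)
    (hMmul : ∀ j k l : ZMod n, (k - j).val ≤ (l - j).val →
      M2 j k * M2 k l = M2 j l) :
    ∀ j k l : ZMod n,
      ((∀ m : ZMod n, 0 < (m - j).val ∧ (m - j).val ≤ (k - j).val → m ∉ SE) ∧
          b j < ⊤ ∧ b j * M2 j k < b k) →
      ((∀ m : ZMod n, 0 < (m - k).val ∧ (m - k).val ≤ (l - k).val → m ∉ SE) ∧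
          b k < ⊤ ∧ b k * M2 k l < b l) →
      ((∀ m : ZMod n, 0 < (m - j).val ∧ (m - j).val ≤ (l - j).val → m ∉ SE) ∧
          b j < ⊤ ∧ b j * M2 j l < b l) := by
  rintro j k l ⟨hjk_SE, hj_fin, hjk⟩ ⟨hkl_SE, -, hkl⟩
  by_cases hk : (k - j).val ≤ (l - j).val
  · refine ⟨fun m hm ↦ (cyclicIoc_subset_union hk hm).elim (hjk_SE m) (hkl_SE m), hj_fin, ?_⟩
    calc b j * M2 j l = b j * M2 j k * M2 k l := by rw [mul_assoc, hMmul j k l hk]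
      _ < b k * M2 k l := ENNReal.mul_lt_mul_left (hM2 k l).1.ne' (hM2 k l).2.ne hjk
      _ < b l := hkl
  · obtain ⟨m, hm⟩ := hSE
    have hm_cover : m ∈ cyclicIoc j k ∪ cyclicIoc k l :=
      cyclicIoc_union_eq_univ (not_le.mp hk) ▸ Set.mem_univ m
    exact (hm_cover.elim (hjk_SE m) (hkl_SE m) hm).elim

/-- If `SE(θ) ≠ ∅`, the starvation relation is transitive: `j ≻ k` and `k ≻ ℓ` imply
`j ≻ ℓ`.  Here `j ≻ k` means the cyclic interval `(j,k]` (the stages `m` with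
`0 < (m−j).val ≤ (k−j).val`) avoids `SE(θ)`, `b j < ∞`, and `b j * M_{jk} < b k`.
The cyclic products satisfy `M_{jk} * M_{kℓ} = M_{jℓ}` whenever `k ∈ [j,ℓ]`. -/
theorem SE_starvation_transitive {n : ℕ} [NeZero n]
    (SE : Set (ZMod n)) (hSE : SE.Nonempty)
    (b : ZMod n → ℝ≥0∞) (hb : ∀ j, 0 < b j)
    (M2 : ZMod n → ZMod n → ℝ≥0∞) (hM2 : ∀ j k, 0 < M2 j k ∧ M2 j k < ⊤)
    (hMmul : ∀ j k l : ZMod n, (k - j).val ≤ (l - j).val →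
      M2 j k * M2 k l = M2 j l) :
    ∀ j k l : ZMod n,
      ((∀ m : ZMod n, 0 < (m - j).val ∧ (m - j).val ≤ (k - j).val → m ∉ SE) ∧
          b j < ⊤ ∧ b j * M2 j k < b k) →
      ((∀ m : ZMod n, 0 < (m - k).val ∧ (m - k).val ≤ (l - k).val → m ∉ SE) ∧
          b k < ⊤ ∧ b k * M2 k l < b l) →
      ((∀ m : ZMod n, 0 < (m - j).val ∧ (m - j).val ≤ (l - j).val → m ∉ SE) ∧
          b j < ⊤ ∧ b j * M2 j l < b l) :=
  SE_starvation_transitive_general SE hSE b M2 hM2 hMmul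
end
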